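/- Let [X,B,m,ν] be a reversible random walk space and let Ω ∈ B be m-connected with Ω_m also m-connected and 0 < ν(Ω) < ν(Ω_m) < ∞. Then g_{m,Ω}(1) < g_{m,Ω}(0) and g_{m,Ω}(2) < g_{m,Ω}(1). -/

import Mathlib

open MeasureTheory ENNReal Filter Topology

namespace RandomWalkSpace

variable {X : Type*} [MeasurableSpace X]

/-- A random walk: a family of probability measures `m x`, measurably depending on `x`. -/
def IsRandomWalk (m : X → Measure X) : Prop :=
  (∀ x, IsProbabilityMeasure (m x)) ∧
    ∀ A : Set X, MeasurableSet A → Measurable fun x => m x A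

/-- Reversibility (detailed balance) of `ν` with respect to the random walk `m`. -/
def Reversible (m : X → Measure X) (ν : Measure X) : Prop :=
  ∀ A B : Set X, MeasurableSet A → MeasurableSet B →
    ∫⁻ x in A, m x B ∂ν = ∫⁻ x in B, m x A ∂ν

/-- The `m`-boundary of `Ω`. -/
def mBoundary (m : X → Measure X) (Ω : Set X) : Set X :=
  {x | x ∉ Ω ∧ 0 < m x Ω}

/-- The `m`-closure of `Ω`. -/
def mClosure (m : X → Measure X) (Ω : Set X) : Set X :=
  Ω ∪ mBoundary m Ω

/-- `D` is `m`-connected (with respect to `ν`). -/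
def mConnected (m : X → Measure X) (ν : Measure X) (D : Set X) : Prop :=
  ∀ A B : Set X, MeasurableSet A → MeasurableSet B → A ⊆ D → B ⊆ D →
    A ∪ B = D → 0 < ν A → 0 < ν B → 0 < ∫⁻ x in A, m x B ∂ν

/-- The `m`-perimeter of `Ω`. -/
noncomputable def mPerimeter (m : X → Measure X) (ν : Measure X) (Ω : Set X) : ℝ≥0∞ :=
  ∫⁻ x in Ω, m x Ωᶜ ∂ν

/-- `survival m Ω n x` is the mass of paths of `n` jumps starting at `x` that stay in `Ω`. -/
noncomputable def survival (m : X → Measure X) (Ω : Set X) : ℕ → X → ℝ≥0∞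
  | 0, _ => 1
  | n + 1, x => ∫⁻ y in Ω, survival m Ω n y ∂(m x)

/-- `gseq m ν Ω n` is the mass of paths of `n` jumps that start in `Ω` and stay in `Ω`. -/
noncomputable def gseq (m : X → Measure X) (ν : Measure X) (Ω : Set X) (n : ℕ) : ℝ≥0∞ :=
  ∫⁻ x in Ω, survival m Ω n x ∂ν

/-- The spectral `m`-heat content of `Ω` at time `t`. -/
noncomputable def heatContent (m : X → Measure X) (ν : Measure X) (Ω : Set X) (t : ℝ) : ℝ≥0∞ :=
  ∑' k : ℕ, gseq m ν Ω k * ENNReal.ofReal (Real.exp (-t) * t ^ k / (Nat.factorial k))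

/-- The nonlocal `p`-energy `∫_{Ω_m×Ω_m} |f(y) − f(x)|^p dm_x(y)dν(x)`. -/
noncomputable def energy (m : X → Measure X) (ν : Measure X) (Ω : Set X) (p : ℝ)
    (f : X → ℝ) : ℝ≥0∞ :=
  ∫⁻ x in mClosure m Ω, ∫⁻ y in mClosure m Ω, ENNReal.ofReal (|f y - f x| ^ p) ∂(m x) ∂ν

/-- `f ∈ L^p_0(Ω_m,ν)`: `f ∈ L^p(Ω_m,ν)` and `f = 0` ν-a.e. on `∂_m Ω`. -/
def InLp0 (m : X → Measure X) (ν : Measure X) (Ω : Set X) (p : ℝ) (f : X → ℝ) : Prop :=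
  MemLp f (ENNReal.ofReal p) (ν.restrict (mClosure m Ω)) ∧
    ∀ᵐ x ∂ν.restrict (mBoundary m Ω), f x = 0

/-- `Ω` satisfies a `p`-Poincaré inequality. -/
def PoincareInequality (m : X → Measure X) (ν : Measure X) (Ω : Set X) (p : ℝ) : Prop :=
  ∃ lam : ℝ, 0 < lam ∧ ∀ f : X → ℝ, InLp0 m ν Ω p f →
    ENNReal.ofReal lam * ∫⁻ x in Ω, ENNReal.ofReal (|f x| ^ p) ∂ν ≤ energy m ν Ω p f

/-- The `m`-stress function of `Ω`. -/
def IsStressFunction (m : X → Measure X) (ν : Measure X) (Ω : Set X) (f : X → ℝ) : Prop :=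
  InLp0 m ν Ω 2 f ∧ (∀ᵐ x ∂ν.restrict (mClosure m Ω), 0 ≤ f x) ∧
    ∀ᵐ x ∂ν.restrict Ω, -∫ y in mClosure m Ω, (f y - f x) ∂(m x) = 1

/-- The `p`-torsion function of `Ω`. -/
def IsPStressFunction (m : X → Measure X) (ν : Measure X) (Ω : Set X) (p : ℝ)
    (f : X → ℝ) : Prop :=
  InLp0 m ν Ω p f ∧ (∀ᵐ x ∂ν.restrict (mClosure m Ω), 0 ≤ f x) ∧
    ∀ᵐ x ∂ν.restrict Ω,
      -∫ y in mClosure m Ω, |f y - f x| ^ (p - 2) * (f y - f x) ∂(m x) = 1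

/-- The Rayleigh quotient infimum `λ_{m,p}(Ω)`. -/
noncomputable def rayleigh (m : X → Measure X) (ν : Measure X) (Ω : Set X) (p : ℝ) : ℝ≥0∞ :=
  ⨅ (f : X → ℝ) (_ : InLp0 m ν Ω p f)
    (_ : 0 < ∫⁻ x in Ω, ENNReal.ofReal (|f x| ^ p) ∂ν),
    (energy m ν Ω p f / 2) / ∫⁻ x in Ω, ENNReal.ofReal (|f x| ^ p) ∂ν

/-- The `m`-Cheeger constant `h_1^m(Ω)`. -/
noncomputable def cheeger1 (m : X → Measure X) (ν : Measure X) (Ω : Set X) : ℝ≥0∞ :=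
  ⨅ (E : Set X) (_ : MeasurableSet E) (_ : E ⊆ Ω) (_ : 0 < ν E),
    mPerimeter m ν E / ν E

/-- The `m`-`p`-Cheeger constant `h_p^m(Ω)`. -/
noncomputable def cheegerP (m : X → Measure X) (ν : Measure X) (Ω : Set X) (p : ℝ) : ℝ≥0∞ :=
  ⨅ (E : Set X) (_ : MeasurableSet E) (_ : E ⊆ Ω) (_ : 0 < ν E),
    mPerimeter m ν E / ν E ^ p

/-- The functional `F_{m,p}(f) = (1/(2p)) ∫∫ |∇f|^p − ∫_Ω f`, with values in `EReal`. -/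
noncomputable def torsionalFunctional (m : X → Measure X) (ν : Measure X) (Ω : Set X)
    (p : ℝ) (f : X → ℝ) : EReal :=
  ((energy m ν Ω p f / ENNReal.ofReal (2 * p) : ℝ≥0∞) : EReal) -
    ((∫ x in Ω, f x ∂ν : ℝ) : EReal)

end RandomWalkSpace

/-!
Let `e n x` be the mass of paths that start at `x`, make `n` jumps inside `Ω` and leave `Ω` with
the next one; then `g(n) = g(n + 1) + ∫_Ω e n dν`, so `g` is decreasing and bounded by `ν(Ω) < ∞`,
and strictness means `∫_Ω e n dν > 0`. For `n = 0` this is `∫_Ω m_x(Ωᶜ) dν ≥ ∫_Ω m_x(∂_mΩ) dν > 0`,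
by `m`-connectedness of `Ω_m = Ω ∪ ∂_mΩ` (and `ν(∂_mΩ) > 0`). Since `e (n + 1) x > 0` exactly when
`m_x` charges `S = Ω ∩ {e n > 0}`, and `ν(S) > 0`, `m`-connectedness of `Ω = Ω ∪ S` carries the
positivity from `n` to `n + 1`.
-/

namespace RandomWalkSpace

variable {X : Type*} [MeasurableSpace X] {m : X → Measure X} {ν : Measure X} {Ω : Set X}

noncomputable def escape (m : X → Measure X) (Ω : Set X) : ℕ → X → ℝ≥0∞
  | 0, x => m x Ωᶜ
  | n + 1, x => ∫⁻ y in Ω, escape m Ω n y ∂(m x)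

theorem measurable_setLIntegral_of_measurable (hm : Measurable m) (hΩ : MeasurableSet Ω)
    {f : X → ℝ≥0∞} (hf : Measurable f) : Measurable fun x => ∫⁻ y in Ω, f y ∂(m x) := by
  simp_rw [← lintegral_indicator hΩ]
  exact (Measure.measurable_lintegral (hf.indicator hΩ)).comp hm

theorem measurable_survival (hm : Measurable m) (hΩ : MeasurableSet Ω) :
    ∀ n, Measurable (survival m Ω n)
  | 0 => measurable_const
  | n + 1 => measurable_setLIntegral_of_measurable hm hΩ (measurable_survival hm hΩ n)

theorem measurable_escape (hm : Measurable m) (hΩ : MeasurableSet Ω) :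
    ∀ n, Measurable (escape m Ω n)
  | 0 => (Measure.measurable_coe hΩ.compl).comp hm
  | n + 1 => measurable_setLIntegral_of_measurable hm hΩ (measurable_escape hm hΩ n)

theorem survival_eq_survival_succ_add_escape (hprob : ∀ x, IsProbabilityMeasure (m x))
    (hm : Measurable m) (hΩ : MeasurableSet Ω) :
    ∀ n x, survival m Ω n x = survival m Ω (n + 1) x + escape m Ω n x
  | 0, x => by
    simp only [survival, escape, setLIntegral_one]
    rw [measure_add_measure_compl hΩ, measure_univ]
  | n + 1, x => by
    rw [survival, survival, escape, ← lintegral_add_left (measurable_survival hm hΩ _)]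
    exact lintegral_congr fun y => survival_eq_survival_succ_add_escape hprob hm hΩ n y

theorem gseq_eq_gseq_succ_add (hprob : ∀ x, IsProbabilityMeasure (m x)) (hm : Measurable m)
    (hΩ : MeasurableSet Ω) (n : ℕ) :
    gseq m ν Ω n = gseq m ν Ω (n + 1) + ∫⁻ x in Ω, escape m Ω n x ∂ν := by
  rw [gseq, gseq, ← lintegral_add_left (measurable_survival hm hΩ _)]
  exact lintegral_congr (survival_eq_survival_succ_add_escape hprob hm hΩ n)

theorem gseq_le_measure (hprob : ∀ x, IsProbabilityMeasure (m x)) (hm : Measurable m)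
    (hΩ : MeasurableSet Ω) : ∀ n, gseq m ν Ω n ≤ ν Ω
  | 0 => by simp [gseq, survival]
  | n + 1 => calc
      gseq m ν Ω (n + 1) ≤ gseq m ν Ω n := by
        rw [gseq_eq_gseq_succ_add hprob hm hΩ n]; exact le_self_add
      _ ≤ ν Ω := gseq_le_measure hprob hm hΩ n

theorem measure_mBoundary_pos (h : ν Ω < ν (mClosure m Ω)) : 0 < ν (mBoundary m Ω) := by
  refine pos_iff_ne_zero.2 fun h0 => h.not_ge ?_
  simpa [mClosure, h0] using measure_union_le (μ := ν) Ω (mBoundary m Ω)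

theorem measurableSet_mBoundary (hm : Measurable m) (hΩ : MeasurableSet Ω) :
    MeasurableSet (mBoundary m Ω) :=
  hΩ.compl.inter (measurableSet_lt measurable_const ((Measure.measurable_coe hΩ).comp hm))

theorem setLIntegral_escape_zero_pos (hm : Measurable m) (hΩ : MeasurableSet Ω)
    (hconn : mConnected m ν (mClosure m Ω)) (h0 : 0 < ν Ω) (h1 : ν Ω < ν (mClosure m Ω)) :
    0 < ∫⁻ x in Ω, escape m Ω 0 x ∂ν :=
  calc 0 < ∫⁻ x in Ω, m x (mBoundary m Ω) ∂ν :=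
        hconn _ _ hΩ (measurableSet_mBoundary hm hΩ) Set.subset_union_left
          Set.subset_union_right rfl h0 (measure_mBoundary_pos h1)
    _ ≤ ∫⁻ x in Ω, escape m Ω 0 x ∂ν :=
        lintegral_mono fun _ => measure_mono fun _ hy => hy.1

theorem support_escape_succ (hm : Measurable m) (hΩ : MeasurableSet Ω) (n : ℕ) :
    Function.support (escape m Ω (n + 1)) =
      Function.support fun x => m x (Function.support (escape m Ω n) ∩ Ω) := by
  ext x
  simp only [Function.mem_support, ← pos_iff_ne_zero, escape]
  exact setLIntegral_pos_iff (measurable_escape hm hΩ n)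

theorem setLIntegral_escape_succ_pos (hm : Measurable m) (hΩ : MeasurableSet Ω)
    (hconn : mConnected m ν Ω) (h0 : 0 < ν Ω) {n : ℕ}
    (hn : 0 < ∫⁻ x in Ω, escape m Ω n x ∂ν) : 0 < ∫⁻ x in Ω, escape m Ω (n + 1) x ∂ν := by
  have hS := measurableSet_support (measurable_escape hm hΩ n)
  have hmS : Measurable fun x => m x (Function.support (escape m Ω n) ∩ Ω) :=
    (Measure.measurable_coe (hS.inter hΩ)).comp hm
  rw [setLIntegral_pos_iff (measurable_escape hm hΩ n)] at hn
  rw [setLIntegral_pos_iff (measurable_escape hm hΩ _), support_escape_succ hm hΩ,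
    ← setLIntegral_pos_iff hmS]
  exact hconn _ _ hΩ (hS.inter hΩ) subset_rfl Set.inter_subset_right
    (Set.union_eq_self_of_subset_right Set.inter_subset_right) h0 hn

theorem setLIntegral_escape_pos (hm : Measurable m) (hΩ : MeasurableSet Ω)
    (hconn : mConnected m ν Ω) (hconnm : mConnected m ν (mClosure m Ω)) (h0 : 0 < ν Ω)
    (h1 : ν Ω < ν (mClosure m Ω)) : ∀ n, 0 < ∫⁻ x in Ω, escape m Ω n x ∂ν
  | 0 => setLIntegral_escape_zero_pos hm hΩ hconnm h0 h1
  | n + 1 => setLIntegral_escape_succ_pos hm hΩ hconn h0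
      (setLIntegral_escape_pos hm hΩ hconn hconnm h0 h1 n)

theorem gseq_succ_lt (hm : IsRandomWalk m) (hΩ : MeasurableSet Ω) (hconn : mConnected m ν Ω)
    (hconnm : mConnected m ν (mClosure m Ω)) (h0 : 0 < ν Ω) (h1 : ν Ω < ν (mClosure m Ω))
    (hfin : ν Ω ≠ ⊤) (n : ℕ) : gseq m ν Ω (n + 1) < gseq m ν Ω n := by
  have hmeas : Measurable m := Measure.measurable_of_measurable_coe m hm.2
  rw [gseq_eq_gseq_succ_add hm.1 hmeas hΩ n]
  exact ENNReal.lt_add_right (ne_top_of_le_ne_top hfin (gseq_le_measure hm.1 hmeas hΩ _))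
    (setLIntegral_escape_pos hmeas hΩ hconn hconnm h0 h1 n).ne'

end RandomWalkSpace

theorem gseq_strict_general {X : Type*} [MeasurableSpace X]
    (m : X → Measure X) (ν : Measure X)
    (hm : RandomWalkSpace.IsRandomWalk m)
    (Ω : Set X) (hΩ : MeasurableSet Ω)
    (hconn : RandomWalkSpace.mConnected m ν Ω)
    (hconnm : RandomWalkSpace.mConnected m ν (RandomWalkSpace.mClosure m Ω))
    (h0 : 0 < ν Ω) (h1 : ν Ω < ν (RandomWalkSpace.mClosure m Ω))
    (h2 : ν (RandomWalkSpace.mClosure m Ω) < ⊤) :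
    RandomWalkSpace.gseq m ν Ω 1 < RandomWalkSpace.gseq m ν Ω 0 ∧
      RandomWalkSpace.gseq m ν Ω 2 < RandomWalkSpace.gseq m ν Ω 1 := by
  have hfin : ν Ω ≠ ⊤ := ne_top_of_le_ne_top h2.ne (measure_mono Set.subset_union_left)
  exact ⟨RandomWalkSpace.gseq_succ_lt hm hΩ hconn hconnm h0 h1 hfin 0,
    RandomWalkSpace.gseq_succ_lt hm hΩ hconn hconnm h0 h1 hfin 1⟩

/-- under the standing assumptions, `g_{m,Ω}(1) < g_{m,Ω}(0)` and
`g_{m,Ω}(2) < g_{m,Ω}(1)`. -/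
theorem gseq_strict {X : Type*} [MeasurableSpace X]
    (m : X → Measure X) (ν : Measure X) [SigmaFinite ν]
    (hm : RandomWalkSpace.IsRandomWalk m) (hrev : RandomWalkSpace.Reversible m ν)
    (Ω : Set X) (hΩ : MeasurableSet Ω)
    (hconn : RandomWalkSpace.mConnected m ν Ω)
    (hconnm : RandomWalkSpace.mConnected m ν (RandomWalkSpace.mClosure m Ω))
    (h0 : 0 < ν Ω) (h1 : ν Ω < ν (RandomWalkSpace.mClosure m Ω))
    (h2 : ν (RandomWalkSpace.mClosure m Ω) < ⊤) :
    RandomWalkSpace.gseq m ν Ω 1 < RandomWalkSpace.gseq m ν Ω 0 ∧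
      RandomWalkSpace.gseq m ν Ω 2 < RandomWalkSpace.gseq m ν Ω 1 :=
  gseq_strict_general m ν hm Ω hΩ hconn hconnm h0 h1 h2
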